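/- Let 0 < β < 1, set c_β = (3-β)/(1+β), and let μ ≥ 2. Suppose ψ : [0,∞) → ℝ is continuous on [0,∞), continuously differentiable on [0,∞), twice continuously differentiable on (0,∞), decays exponentially together with its first derivative (|ψ(r)| + |ψ'(r)| ≤ C e^{-a r} for some C, a > 0), and satisfies the ODE ψ''(r) + (2/r)ψ'(r) - ψ(r) + (c_β q(r)² - μ/r²) ψ(r) = 0 for all r > 0. Then ψ is identically zero. (This says that L_β has no zero mode in any spherical-harmonic sector of eigenvalue μ_k ≥ 2, i.e. in any nonradial sector.) -/

import Mathlib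

open MeasureTheory Set Filter Topology

noncomputable section

private lemma no_nonradial_zero_mode_aux
    (q : ℝ → ℝ)
    (hqsmooth : ContDiffOn ℝ (⊤ : ℕ∞) q (Set.Ioi 0))
    (hqpos : ∀ r > (0 : ℝ), 0 < q r)
    (hq'neg : ∀ r > (0 : ℝ), deriv q r < 0)
    (hqode : ∀ r > (0 : ℝ), deriv (deriv q) r + (2 / r) * deriv q r - q r + (q r) ^ 3 = 0)
    (hqdecay : ∃ C a : ℝ, 0 < C ∧ 0 < a ∧ ∀ r ≥ (0 : ℝ),
      |q r| + |deriv q r| + |deriv (deriv q) r| ≤ C * Real.exp (-a * r))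
    (cβ : ℝ) (hc3 : cβ < 3)
    (μ : ℝ) (hμ : 2 ≤ μ)
    (ψ : ℝ → ℝ)
    (hψC2 : ContDiffOn ℝ 2 ψ (Set.Ioi 0))
    (hψdecay : ∃ C a : ℝ, 0 < C ∧ 0 < a ∧ ∀ r ≥ (0 : ℝ),
      |ψ r| + |deriv ψ r| ≤ C * Real.exp (-a * r))
    (hψode : ∀ r > (0 : ℝ), deriv (deriv ψ) r + (2 / r) * deriv ψ r - ψ r
        + (cβ * (q r) ^ 2 - μ / r ^ 2) * ψ r = 0)
    (r₀ : ℝ) (hr₀ : 0 < r₀) (hpos : 0 < ψ r₀) : False := by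
  obtain ⟨Cψ, aψ, hCψ, haψ, hψb⟩ := hψdecay
  obtain ⟨Cq, aq, hCq, haq, hqb⟩ := hqdecay
  -- basic differentiability facts
  have hqd : ∀ r > (0:ℝ), HasDerivAt q (deriv q r) r ∧ HasDerivAt (deriv q) (deriv (deriv q) r) r ∧
      HasDerivAt (deriv (deriv q)) (deriv (deriv (deriv q)) r) r := by
    have h0 : ContDiffOn ℝ 3 q (Ioi 0) := hqsmooth.of_le (WithTop.coe_le_coe.mpr le_top)
    have h1 : ContDiffOn ℝ 2 (deriv q) (Ioi 0) := h0.deriv_of_isOpen isOpen_Ioi (by norm_num)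
    have h2 : ContDiffOn ℝ 1 (deriv (deriv q)) (Ioi 0) := h1.deriv_of_isOpen isOpen_Ioi (by norm_num)
    intro r hr
    refine ⟨((h0.differentiableOn (by norm_num)).differentiableAt
        (isOpen_Ioi.mem_nhds hr)).hasDerivAt,
      ((h1.differentiableOn (by norm_num)).differentiableAt
        (isOpen_Ioi.mem_nhds hr)).hasDerivAt,
      ((h2.differentiableOn (by norm_num)).differentiableAt
        (isOpen_Ioi.mem_nhds hr)).hasDerivAt⟩
  have hψd : ∀ r > (0:ℝ), HasDerivAt ψ (deriv ψ r) r ∧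
      HasDerivAt (deriv ψ) (deriv (deriv ψ) r) r := by
    have h1 : ContDiffOn ℝ 1 (deriv ψ) (Ioi 0) := hψC2.deriv_of_isOpen isOpen_Ioi (by norm_num)
    intro r hr
    refine ⟨((hψC2.differentiableOn (by norm_num)).differentiableAt
        (isOpen_Ioi.mem_nhds hr)).hasDerivAt,
      ((h1.differentiableOn (by norm_num)).differentiableAt
        (isOpen_Ioi.mem_nhds hr)).hasDerivAt⟩
  have hψct : ∀ x > (0:ℝ), ContinuousAt ψ x :=
    fun x hx => (hψd x hx).1.differentiableAt.continuousAt
  -- the Wronskian-type quantity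
  set J : ℝ → ℝ := fun x => x ^ 2 * (ψ x * deriv (deriv q) x - deriv ψ x * deriv q x) with hJdef
  -- its derivative
  have hJ : ∀ r > (0:ℝ), HasDerivAt J
      ((ψ r * (-deriv q r)) * ((μ - 2) + (3 - cβ) * r ^ 2 * q r ^ 2)) r := by
    intro r hr
    obtain ⟨hq1, hq2, hq3d⟩ := hqd r hr
    obtain ⟨hψ1, hψ2⟩ := hψd r hr
    have hq3 : deriv (deriv (deriv q)) r + ((-2 / r ^ 2) * deriv q r + (2 / r) * deriv (deriv q) r)
        - deriv q r + 3 * q r ^ 2 * deriv q r = 0 := by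
      have hconst : HasDerivAt (fun x => deriv (deriv q) x + (2 / x) * deriv q x - q x + q x ^ 3)
          (0 : ℝ) r := by
        refine (hasDerivAt_const r (0:ℝ)).congr_of_eventuallyEq ?_
        filter_upwards [isOpen_Ioi.mem_nhds hr] with x hx
        exact hqode x hx
      have hinv : HasDerivAt (fun x : ℝ => 2 / x) (-2 / r ^ 2) r := by
        have h := (hasDerivAt_inv (ne_of_gt hr)).const_mul (2:ℝ)
        rw [show (fun x : ℝ => 2 / x) = fun x => 2 * x⁻¹ from funext fun x => div_eq_mul_inv _ _]
        exact h.congr_deriv (by ring)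
      have hD : HasDerivAt (fun x => deriv (deriv q) x + (2 / x) * deriv q x - q x + q x ^ 3)
          (deriv (deriv (deriv q)) r + ((-2 / r ^ 2) * deriv q r + (2 / r) * deriv (deriv q) r)
            - deriv q r + 3 * q r ^ 2 * deriv q r) r := by
        have h3 : HasDerivAt (fun x => q x ^ 3) (3 * q r ^ 2 * deriv q r) r := by
          simpa using hq1.fun_pow 3
        exact ((hq3d.add (hinv.mul hq2)).sub hq1).add h3
      exact hD.unique hconst
    have e1 : deriv (deriv ψ) r
        = ψ r - (2 / r) * deriv ψ r - (cβ * q r ^ 2 - μ / r ^ 2) * ψ r := by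
      have := hψode r hr; linarith
    have e2 : deriv (deriv (deriv q)) r
        = -((-2 / r ^ 2) * deriv q r + (2 / r) * deriv (deriv q) r) + deriv q r
          - 3 * q r ^ 2 * deriv q r := by linarith
    have inner' : HasDerivAt (fun x => ψ x * deriv (deriv q) x - deriv ψ x * deriv q x)
        (deriv ψ r * deriv (deriv q) r + ψ r * deriv (deriv (deriv q)) r
          - (deriv (deriv ψ) r * deriv q r + deriv ψ r * deriv (deriv q) r)) r :=
      (hψ1.mul hq3d).sub (hψ2.mul hq2)
    have hraw := (hasDerivAt_pow 2 r).fun_mul inner'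
    refine hraw.congr_deriv ?_
    rw [e1, e2]
    field_simp
    ring
  -- monotonicity of J on intervals of positivity of ψ
  have hJmono : ∀ s : Set ℝ, s ⊆ Ioi 0 → Convex ℝ s → (∀ x ∈ interior s, 0 < ψ x) →
      StrictMonoOn J s := by
    intro s hs hconv hpos'
    refine strictMonoOn_of_deriv_pos hconv
      (fun x hx => ((hJ x (hs hx)).differentiableAt.continuousAt).continuousWithinAt) ?_
    intro x hx
    have hx0 : 0 < x := hs (interior_subset hx)
    rw [(hJ x hx0).deriv]
    have hψx := hpos' x hx
    have hq1n := hq'neg x hx0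
    have hqx := hqpos x hx0
    have hbr : 0 < (μ - 2) + (3 - cβ) * x ^ 2 * q x ^ 2 := by
      have h1 : 0 < (3 - cβ) * x ^ 2 * q x ^ 2 :=
        mul_pos (mul_pos (by linarith) (pow_pos hx0 2)) (pow_pos hqx 2)
      linarith
    have : 0 < ψ x * (-deriv q x) := by nlinarith
    exact mul_pos this hbr
  -- pointwise bounds
  have hψ0b : ∀ r ≥ (0:ℝ), |ψ r| ≤ Cψ * Real.exp (-aψ * r) := by
    intro r hr; have h := hψb r hr; have := abs_nonneg (deriv ψ r); linarith
  have hψ1b : ∀ r ≥ (0:ℝ), |deriv ψ r| ≤ Cψ * Real.exp (-aψ * r) := by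
    intro r hr; have h := hψb r hr; have := abs_nonneg (ψ r); linarith
  have hq1b : ∀ r ≥ (0:ℝ), |deriv q r| ≤ Cq * Real.exp (-aq * r) := by
    intro r hr; have h := hqb r hr
    have := abs_nonneg (q r); have := abs_nonneg (deriv (deriv q) r); linarith
  have hq2b : ∀ r ≥ (0:ℝ), |deriv (deriv q) r| ≤ Cq * Real.exp (-aq * r) := by
    intro r hr; have h := hqb r hr
    have := abs_nonneg (q r); have := abs_nonneg (deriv q r); linarith
  have hexple : ∀ b r : ℝ, 0 < b → 0 ≤ r → Real.exp (-b * r) ≤ 1 := by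
    intro b r hb hr
    rw [Real.exp_le_one_iff]
    nlinarith
  have hJbound : ∀ r ≥ (0:ℝ),
      ‖J r‖ ≤ 2 * Cψ * Cq * (r ^ 2 * (Real.exp (-aψ * r) * Real.exp (-aq * r))) := by
    intro r hr
    have b1 : |ψ r * deriv (deriv q) r| ≤ Cψ * Real.exp (-aψ * r) * (Cq * Real.exp (-aq * r)) := by
      rw [abs_mul]
      exact mul_le_mul (hψ0b r hr) (hq2b r hr) (abs_nonneg _)
        (by positivity)
    have b2 : |deriv ψ r * deriv q r| ≤ Cψ * Real.exp (-aψ * r) * (Cq * Real.exp (-aq * r)) := by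
      rw [abs_mul]
      exact mul_le_mul (hψ1b r hr) (hq1b r hr) (abs_nonneg _) (by positivity)
    have b3 : |ψ r * deriv (deriv q) r - deriv ψ r * deriv q r|
        ≤ |ψ r * deriv (deriv q) r| + |deriv ψ r * deriv q r| := abs_sub _ _
    have : ‖J r‖ = r ^ 2 * |ψ r * deriv (deriv q) r - deriv ψ r * deriv q r| := by
      rw [hJdef]
      rw [Real.norm_eq_abs, abs_mul, abs_of_nonneg (by positivity : (0:ℝ) ≤ r ^ 2)]
    rw [this]
    have hr2 : (0:ℝ) ≤ r ^ 2 := by positivity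
    nlinarith [abs_nonneg (ψ r * deriv (deriv q) r - deriv ψ r * deriv q r)]
  -- limit of J at 0⁺
  have hJ0 : Tendsto J (𝓝[>] (0:ℝ)) (𝓝 0) := by
    apply squeeze_zero_norm' (a := fun r => 2 * Cψ * Cq * r ^ 2)
    · filter_upwards [self_mem_nhdsWithin] with r (hr : r ∈ Ioi 0)
      have h1 := hJbound r (le_of_lt hr)
      have h2 : Real.exp (-aψ * r) * Real.exp (-aq * r) ≤ 1 := by
        have := hexple aψ r haψ hr.le
        have := hexple aq r haq hr.le
        nlinarith [Real.exp_pos (-aψ * r), Real.exp_pos (-aq * r)]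
      calc ‖J r‖ ≤ 2 * Cψ * Cq * (r ^ 2 * (Real.exp (-aψ * r) * Real.exp (-aq * r))) := h1
        _ ≤ 2 * Cψ * Cq * (r ^ 2 * 1) := by
            refine mul_le_mul_of_nonneg_left ?_ (by positivity)
            exact mul_le_mul_of_nonneg_left h2 (sq_nonneg r)
        _ = 2 * Cψ * Cq * r ^ 2 := by ring
    · have hc : Continuous (fun r : ℝ => 2 * Cψ * Cq * r ^ 2) :=
        continuous_const.mul (continuous_pow 2)
      have := (hc.tendsto 0).mono_left (nhdsWithin_le_nhds (s := Ioi (0:ℝ)))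
      simpa using this
  -- limit of J at ∞
  have hJtop : Tendsto J atTop (𝓝 0) := by
    apply squeeze_zero_norm'
      (a := fun r => 2 * Cψ * Cq * (r ^ 2 * Real.exp (-(aψ + aq) * r)))
    · filter_upwards [eventually_ge_atTop (0:ℝ)] with r hr
      have h1 := hJbound r hr
      rw [← Real.exp_add] at h1
      convert h1 using 4
      ring
    · have hb : 0 < aψ + aq := by linarith
      have h1 := Real.tendsto_pow_mul_exp_neg_atTop_nhds_zero 2
      have h2 : Tendsto (fun r : ℝ => (aψ + aq) * r) atTop atTop :=
        Tendsto.const_mul_atTop hb tendsto_id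
      have h3 := h1.comp h2
      have h4 : (fun r : ℝ => r ^ 2 * Real.exp (-(aψ + aq) * r))
          = fun r => ((aψ + aq) ^ 2)⁻¹ * (((aψ + aq) * r) ^ 2 * Real.exp (-((aψ + aq) * r))) := by
        funext r
        rw [neg_mul]
        field_simp
      have h5 : Tendsto (fun r : ℝ => r ^ 2 * Real.exp (-(aψ + aq) * r)) atTop (𝓝 0) := by
        rw [h4]
        simpa using (h3.const_mul ((aψ + aq) ^ 2)⁻¹)
      simpa using h5.const_mul (2 * Cψ * Cq)
  -- left comparison: 0 < J r₀
  have hleft : 0 < J r₀ := by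
    have hcase : (∀ x ∈ Ioc (0:ℝ) r₀, 0 < ψ x) ∨
        ∃ α, 0 < α ∧ α < r₀ ∧ ψ α = 0 ∧ ∀ x ∈ Ioc α r₀, 0 < ψ x := by
      set S : Set ℝ := {x | x ∈ Icc 0 r₀ ∧ ψ x ≤ 0} with hS
      by_cases hSne : S.Nonempty
      · have hbdd : BddAbove S := BddAbove.mono (fun x hx => hx.1) bddAbove_Icc
        set α := sSup S with hα
        have hαmem : ∀ x ∈ S, x ≤ α := fun x hx => le_csSup hbdd hx
        have hα0 : 0 ≤ α := by
          obtain ⟨x, hx⟩ := hSne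
          exact le_trans hx.1.1 (hαmem x hx)
        have hαr : α ≤ r₀ := csSup_le hSne fun x hx => hx.1.2
        have hgt : ∀ x ∈ Ioc α r₀, 0 < ψ x := by
          intro x hx
          by_contra h
          have hxS : x ∈ S := ⟨⟨le_trans hα0 hx.1.le, hx.2⟩, le_of_not_gt h⟩
          exact absurd (hαmem x hxS) (not_le.mpr hx.1)
        rcases eq_or_lt_of_le hα0 with h0 | h0
        · left
          intro x hx
          exact hgt x ⟨lt_of_le_of_lt (le_of_eq h0.symm) hx.1, hx.2⟩
        · right
          have hψα_le : ψ α ≤ 0 := by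
            by_contra h
            have hα' : 0 < ψ α := lt_of_not_ge h
            have hev : ∀ᶠ x in 𝓝 α, 0 < ψ x :=
              (hψct α h0).eventually (eventually_gt_nhds hα')
            obtain ⟨δ, hδ, hball⟩ := Metric.eventually_nhds_iff.mp hev
            obtain ⟨s, hsS, hs⟩ := exists_lt_of_lt_csSup hSne (by linarith : α - δ < α)
            have : 0 < ψ s := by
              apply hball
              rw [Real.dist_eq, abs_lt]
              have := hαmem s hsS
              constructor <;> linarith
            linarith [hsS.2]
          have hαr' : α < r₀ := lt_of_le_of_ne hαr (by
            intro h; rw [h] at hψα_le; linarith)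
          have hψα_ge : 0 ≤ ψ α := by
            by_contra h
            have hα' : ψ α < 0 := lt_of_not_ge h
            have hev : ∀ᶠ x in 𝓝 α, ψ x < 0 :=
              (hψct α h0).eventually (eventually_lt_nhds hα')
            obtain ⟨δ, hδ, hball⟩ := Metric.eventually_nhds_iff.mp hev
            set x := min (α + δ / 2) ((α + r₀) / 2) with hx
            have hx1 : α < x := by
              apply lt_min <;> [linarith; linarith]
            have hx2 : x ≤ r₀ := le_trans (min_le_right _ _) (by linarith)
            have hx3 : dist x α < δ := by
              rw [Real.dist_eq, abs_lt]
              have := min_le_left (α + δ / 2) ((α + r₀) / 2)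
              constructor <;> linarith
            have := hgt x ⟨hx1, hx2⟩
            have := hball hx3
            linarith
          exact ⟨α, h0, hαr', le_antisymm hψα_le hψα_ge, hgt⟩
      · left
        intro x hx
        by_contra h
        exact hSne ⟨x, ⟨hx.1.le, hx.2⟩, le_of_not_gt h⟩
    rcases hcase with hcase | ⟨α, hα0, hαr, hψα, hgt⟩
    · -- ψ > 0 on (0, r₀]
      have hmono : StrictMonoOn J (Ioc 0 r₀) := by
        refine hJmono _ (fun x hx => hx.1) (convex_Ioc _ _) ?_
        intro x hx
        rw [interior_Ioc] at hx
        exact hcase x ⟨hx.1, hx.2.le⟩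
      set s := r₀ / 2 with hs
      have hs0 : 0 < s := by positivity
      have hsr : s < r₀ := by
        rw [hs]; linarith
      have hJs : 0 ≤ J s := by
        refine le_of_tendsto hJ0 ?_
        filter_upwards [Ioc_mem_nhdsGT hs0] with t ht
        exact hmono.monotoneOn ⟨ht.1, le_trans ht.2 hsr.le⟩ ⟨hs0, hsr.le⟩ ht.2
      calc (0:ℝ) ≤ J s := hJs
        _ < J r₀ := hmono ⟨hs0, hsr.le⟩ ⟨hr₀, le_rfl⟩ hsr
    · -- interior zero α with ψ(α)=0
      have hmono : StrictMonoOn J (Icc α r₀) := by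
        refine hJmono _ (fun x hx => lt_of_lt_of_le hα0 hx.1) (convex_Icc _ _) ?_
        intro x hx
        rw [interior_Icc] at hx
        exact hgt x ⟨hx.1, hx.2.le⟩
      have hslope : 0 ≤ deriv ψ α := by
        have hd := (hψd α hα0).1
        have ht := hasDerivAt_iff_tendsto_slope.mp hd
        have ht' : Tendsto (slope ψ α) (𝓝[>] α) (𝓝 (deriv ψ α)) :=
          ht.mono_left (nhdsWithin_mono α fun x hx => ne_of_gt hx)
        refine ge_of_tendsto ht' ?_
        filter_upwards [Ioo_mem_nhdsGT hαr] with x hx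
        rw [slope_def_field]
        have h1 := hgt x ⟨hx.1, hx.2.le⟩
        rw [hψα]
        have h2 : 0 < x - α := by linarith [hx.1]
        exact le_of_lt (div_pos (by linarith) h2)
      have hJα : 0 ≤ J α := by
        rw [hJdef]
        simp only [hψα, zero_mul, zero_sub]
        have hq1n := hq'neg α hα0
        have h4 : 0 ≤ -(deriv ψ α * deriv q α) := by nlinarith
        exact mul_nonneg (sq_nonneg α) h4
      calc (0:ℝ) ≤ J α := hJα
        _ < J r₀ := hmono ⟨le_rfl, hαr.le⟩ ⟨hαr.le, le_rfl⟩ hαr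
  -- right comparison: J r₀ < 0
  have hright : J r₀ < 0 := by
    have hcase : (∀ x ∈ Ici r₀, 0 < ψ x) ∨
        ∃ b, r₀ < b ∧ ψ b = 0 ∧ ∀ x ∈ Ico r₀ b, 0 < ψ x := by
      set T : Set ℝ := {x | r₀ ≤ x ∧ ψ x ≤ 0} with hT
      by_cases hTne : T.Nonempty
      · right
        have hbdd : BddBelow T := ⟨r₀, fun x hx => hx.1⟩
        set b := sInf T with hb
        have hbmem : ∀ x ∈ T, b ≤ x := fun x hx => csInf_le hbdd hx
        have hbr : r₀ ≤ b := le_csInf hTne fun x hx => hx.1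
        have hb0 : 0 < b := lt_of_lt_of_le hr₀ hbr
        have hψb_le : ψ b ≤ 0 := by
          by_contra h
          have hb' : 0 < ψ b := lt_of_not_ge h
          have hev : ∀ᶠ x in 𝓝 b, 0 < ψ x :=
            (hψct b hb0).eventually (eventually_gt_nhds hb')
          obtain ⟨δ, hδ, hball⟩ := Metric.eventually_nhds_iff.mp hev
          obtain ⟨t, htT, ht⟩ := exists_lt_of_csInf_lt hTne (by linarith : b < b + δ)
          have : 0 < ψ t := by
            apply hball
            rw [Real.dist_eq, abs_lt]
            have := hbmem t htT
            constructor <;> linarith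
          linarith [htT.2]
        have hbr' : r₀ < b := lt_of_le_of_ne hbr (by
          intro h; rw [← h] at hψb_le; linarith)
        have hgt : ∀ x ∈ Ico r₀ b, 0 < ψ x := by
          intro x hx
          by_contra h
          have hxT : x ∈ T := ⟨hx.1, le_of_not_gt h⟩
          exact absurd (hbmem x hxT) (not_le.mpr hx.2)
        have hψb_ge : 0 ≤ ψ b := by
          by_contra h
          have hb' : ψ b < 0 := lt_of_not_ge h
          have hev : ∀ᶠ x in 𝓝 b, ψ x < 0 :=
            (hψct b hb0).eventually (eventually_lt_nhds hb')
          obtain ⟨δ, hδ, hball⟩ := Metric.eventually_nhds_iff.mp hev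
          set x := max (b - δ / 2) ((r₀ + b) / 2) with hx
          have hx1 : x < b := by
            apply max_lt <;> [linarith; linarith]
          have hx2 : r₀ ≤ x := le_trans (by linarith) (le_max_right _ _)
          have hx3 : dist x b < δ := by
            rw [Real.dist_eq, abs_lt]
            have := le_max_left (b - δ / 2) ((r₀ + b) / 2)
            constructor <;> linarith
          have := hgt x ⟨hx2, hx1⟩
          have := hball hx3
          linarith
        exact ⟨b, hbr', le_antisymm hψb_le hψb_ge, hgt⟩
      · left
        intro x hx
        by_contra h
        exact hTne ⟨x, hx, le_of_not_gt h⟩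
    rcases hcase with hcase | ⟨b, hbr, hψbz, hgt⟩
    · -- ψ > 0 on [r₀, ∞)
      have hmono : StrictMonoOn J (Ici r₀) := by
        refine hJmono _ (fun x hx => lt_of_lt_of_le hr₀ hx) (convex_Ici _) ?_
        intro x hx
        rw [interior_Ici] at hx
        exact hcase x (mem_Ici.mpr (le_of_lt hx))
      set t := r₀ + 1 with htdef
      have hrt : r₀ < t := by rw [htdef]; linarith
      have hJt : J t ≤ 0 := by
        refine ge_of_tendsto hJtop ?_
        filter_upwards [eventually_ge_atTop t] with u hu
        exact hmono.monotoneOn (le_of_lt hrt) (le_trans hrt.le hu) hu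
      calc J r₀ < J t := hmono (mem_Ici.mpr le_rfl) hrt.le hrt
        _ ≤ 0 := hJt
    · -- first zero b to the right
      have hmono : StrictMonoOn J (Icc r₀ b) := by
        refine hJmono _ (fun x hx => lt_of_lt_of_le hr₀ hx.1) (convex_Icc _ _) ?_
        intro x hx
        rw [interior_Icc] at hx
        exact hgt x ⟨hx.1.le, hx.2⟩
      have hb0 : 0 < b := lt_trans hr₀ hbr
      have hslope : deriv ψ b ≤ 0 := by
        have hd := (hψd b hb0).1
        have ht := hasDerivAt_iff_tendsto_slope.mp hd
        have ht' : Tendsto (slope ψ b) (𝓝[<] b) (𝓝 (deriv ψ b)) :=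
          ht.mono_left (nhdsWithin_mono b fun x hx => ne_of_lt hx)
        refine le_of_tendsto ht' ?_
        filter_upwards [Ioo_mem_nhdsLT hbr] with x hx
        rw [slope_def_field]
        have h1 := hgt x ⟨hx.1.le, hx.2⟩
        rw [hψbz]
        have h2 : x - b < 0 := by linarith [hx.2]
        have h3 : ψ x - 0 > 0 := by linarith
        exact le_of_lt (div_neg_of_pos_of_neg h3 h2)
      have hJb : J b ≤ 0 := by
        rw [hJdef]
        simp only [hψbz, zero_mul, zero_sub]
        have hq1n := hq'neg b hb0
        have h4 : -(deriv ψ b * deriv q b) ≤ 0 := by nlinarith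
        exact mul_nonpos_of_nonneg_of_nonpos (sq_nonneg b) h4
      calc J r₀ < J b := hmono ⟨le_rfl, hbr.le⟩ ⟨hbr.le, le_rfl⟩ hbr
        _ ≤ 0 := hJb
  linarith

/-- `L_β` has no zero mode in any spherical-harmonic sector with eigenvalue `μ ≥ 2`:
an exponentially decaying solution of
`ψ'' + (2/r)ψ' - ψ + (c_β q² - μ/r²)ψ = 0` on `(0,∞)` vanishes identically. -/
theorem no_nonradial_zero_mode
    (q : ℝ → ℝ)
    (hqsmooth : ContDiffOn ℝ (⊤ : ℕ∞) q (Set.Ici 0))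
    (hqpos : ∀ r ≥ (0 : ℝ), 0 < q r)
    (hq'neg : ∀ r > (0 : ℝ), deriv q r < 0)
    (hqode : ∀ r > (0 : ℝ), deriv (deriv q) r + (2 / r) * deriv q r - q r + (q r) ^ 3 = 0)
    (hqdecay : ∃ C a : ℝ, 0 < C ∧ 0 < a ∧ ∀ r ≥ (0 : ℝ),
      |q r| + |deriv q r| + |deriv (deriv q) r| ≤ C * Real.exp (-a * r))
    (β : ℝ) (hβ₀ : 0 < β) (hβ₁ : β < 1)
    (cβ : ℝ) (hcβ : cβ = (3 - β) / (1 + β))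
    (μ : ℝ) (hμ : 2 ≤ μ)
    (ψ : ℝ → ℝ)
    (hψcont : ContinuousOn ψ (Set.Ici 0))
    (hψC1 : ContDiffOn ℝ 1 ψ (Set.Ici 0))
    (hψC2 : ContDiffOn ℝ 2 ψ (Set.Ioi 0))
    (hψdecay : ∃ C a : ℝ, 0 < C ∧ 0 < a ∧ ∀ r ≥ (0 : ℝ),
      |ψ r| + |deriv ψ r| ≤ C * Real.exp (-a * r))
    (hψode : ∀ r > (0 : ℝ), deriv (deriv ψ) r + (2 / r) * deriv ψ r - ψ r
        + (cβ * (q r) ^ 2 - μ / r ^ 2) * ψ r = 0) :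
    ∀ r ≥ (0 : ℝ), ψ r = 0 := by
  have hc3 : cβ < 3 := by
    rw [hcβ, div_lt_iff₀ (by linarith : (0:ℝ) < 1 + β)]
    nlinarith
  have hqsmooth' : ContDiffOn ℝ (⊤ : ℕ∞) q (Set.Ioi 0) := hqsmooth.mono Ioi_subset_Ici_self
  have hqpos' : ∀ r > (0:ℝ), 0 < q r := fun r hr => hqpos r hr.le
  intro r hr
  by_contra hne
  obtain ⟨r', hr', hner'⟩ : ∃ r' > (0:ℝ), ψ r' ≠ 0 := by
    rcases lt_or_eq_of_le hr with h | h
    · exact ⟨r, h, hne⟩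
    · have hψ0ne : ψ 0 ≠ 0 := by rw [← h] at hne; exact hne
      have hc : ContinuousWithinAt ψ (Set.Ici 0) 0 := hψcont 0 self_mem_Ici
      have hev : ψ ⁻¹' {(0:ℝ)}ᶜ ∈ 𝓝[Set.Ici (0:ℝ)] 0 :=
        hc (compl_singleton_mem_nhds hψ0ne)
      have hev' : ψ ⁻¹' {(0:ℝ)}ᶜ ∈ 𝓝[>] (0:ℝ) :=
        nhdsWithin_mono 0 Ioi_subset_Ici_self hev
      obtain ⟨x, hx1, hx2⟩ := (Filter.eventually_iff_exists_mem.mpr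
        ⟨_, hev', fun y hy => hy⟩).and (self_mem_nhdsWithin (s := Ioi (0:ℝ)) (a := (0:ℝ)))
        |>.exists
      exact ⟨x, hx2, hx1⟩
  rcases hner'.lt_or_gt with hneg | hposr
  · -- apply aux to -ψ
    refine no_nonradial_zero_mode_aux q hqsmooth' hqpos' hq'neg hqode hqdecay cβ hc3 μ hμ
      (fun x => -ψ x) (hψC2.neg) ?_ ?_ r' hr' (by simpa using hneg)
    · obtain ⟨C, a, hC, ha, hdec⟩ := hψdecay
      refine ⟨C, a, hC, ha, fun s hs => ?_⟩
      have h1 : deriv (fun x => -ψ x) s = -deriv ψ s := deriv.neg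
      rw [h1]
      simpa using hdec s hs
    · intro s hs
      have hfun : deriv (fun x => -ψ x) = fun x => -deriv ψ x := funext fun x => deriv.neg
      rw [hfun]
      have h2 : deriv (fun x => -deriv ψ x) s = -deriv (deriv ψ) s := deriv.neg
      rw [h2]
      have := hψode s hs
      ring_nf
      ring_nf at this
      linarith
  · exact no_nonradial_zero_mode_aux q hqsmooth' hqpos' hq'neg hqode hqdecay cβ hc3 μ hμ
      ψ hψC2 hψdecay hψode r' hr' hposr

end
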